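/- arXiv:1108.5533 — 2 statements merged into one kernel-verified Lean document; each statement's English description precedes it below -/
import Mathlib

section
/- Let γ ∈ ℝ^p, let Γ be a subspace of ℝ^p with distortion δ (i.e. ∀x ∈ Γ, √p‖x‖₂ ≤ δ‖x‖₁), and let π_Γ be the orthogonal projection onto Γ. Then for any subset S ⊆ {1,…,p} with |S| = s, ‖γ_S‖₁ ≤ (√s/√p)δ‖γ‖₁ + (1+δ)√s ‖π_{Γ^⊥}(γ)‖₂. -/
/-!
Split `γ = v + w` with `v = π_Γ γ` and `w = π_{Γ^⊥} γ`. Cauchy–Schwarz gives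
`‖γ_S‖₁ ≤ √s (‖v‖₂ + ‖w‖₂)`. Since `v ∈ Γ`, the distortion bound and the triangle inequality
`‖v‖₁ ≤ ‖γ‖₁ + ‖w‖₁ ≤ ‖γ‖₁ + √p ‖w‖₂` give `√p ‖v‖₂ ≤ δ ‖γ‖₁ + δ √p ‖w‖₂`.
-/

open Finset

theorem sum_abs_add_le_sum_abs_add_sum_abs {ι : Type*} (x y : ι → ℝ) (T : Finset ι) :
    ∑ i ∈ T, |x i + y i| ≤ ∑ i ∈ T, |x i| + ∑ i ∈ T, |y i| :=
  (sum_le_sum fun i _ ↦ abs_add_le (x i) (y i)).trans_eq sum_add_distrib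

theorem sqrt_mul_le_sqrt_div_sqrt_mul {m n : ℕ} {a b : ℝ} (hmn : m ≤ n) (h : √n * a ≤ b) :
    √m * a ≤ √m / √n * b := by
  rcases Nat.eq_zero_or_pos n with rfl | hn
  · simp [Nat.le_zero.mp hmn]
  · have hn' : 0 < √n := by positivity
    calc √m * a = √m / √n * (√n * a) := by field_simp
      _ ≤ √m / √n * b := by gcongr

variable {ι : Type*} [Fintype ι]

theorem EuclideanSpace.sum_abs_le_sqrt_card_mul_norm (x : EuclideanSpace ℝ ι) (T : Finset ι) :
    ∑ i ∈ T, |x i| ≤ √(#T) * ‖x‖ := by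
  have hT : ∑ i ∈ T, |x i| ^ 2 ≤ ‖x‖ ^ 2 := by
    rw [EuclideanSpace.norm_sq_eq]
    exact sum_le_univ_sum_of_nonneg fun i ↦ by positivity
  calc ∑ i ∈ T, |x i| = ∑ i ∈ T, 1 * |x i| := by simp only [one_mul]
    _ ≤ √(∑ i ∈ T, 1 ^ 2) * √(∑ i ∈ T, |x i| ^ 2) := Real.sum_mul_le_sqrt_mul_sqrt _ _ _
    _ ≤ √(#T) * ‖x‖ := by
      simp only [one_pow, sum_const, nsmul_eq_mul, mul_one]
      gcongr
      exact Real.sqrt_le_left (norm_nonneg x) |>.mpr hT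

theorem sqrt_card_mul_norm_starProjection_le {Γ : Submodule ℝ (EuclideanSpace ℝ ι)} {δ : ℝ}
    (hδ : 0 ≤ δ) (hdist : ∀ x ∈ Γ, √(Fintype.card ι) * ‖x‖ ≤ δ * ∑ i, |x i|)
    (γ : EuclideanSpace ℝ ι) :
    √(Fintype.card ι) * ‖Γ.starProjection γ‖ ≤
      δ * ∑ i, |γ i| + δ * √(Fintype.card ι) * ‖Γᗮ.starProjection γ‖ := by
  set v := Γ.starProjection γ
  set w := Γᗮ.starProjection γ
  have hv : v = γ + -w := by
    rw [← Γ.starProjection_add_starProjection_orthogonal γ, add_neg_cancel_right]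
  have hv₁ : ∑ i, |v i| ≤ ∑ i, |γ i| + √(Fintype.card ι) * ‖w‖ := calc
    ∑ i, |v i| ≤ ∑ i, |γ i| + ∑ i, |-w i| := by
      rw [hv]; exact sum_abs_add_le_sum_abs_add_sum_abs γ (-w) univ
    _ ≤ ∑ i, |γ i| + √(Fintype.card ι) * ‖w‖ := by
      simp only [abs_neg]
      gcongr
      exact EuclideanSpace.sum_abs_le_sqrt_card_mul_norm w univ
  calc √(Fintype.card ι) * ‖v‖ ≤ δ * ∑ i, |v i| := hdist v (Γ.starProjection_apply_mem γ)
    _ ≤ δ * (∑ i, |γ i| + √(Fintype.card ι) * ‖w‖) := by gcongr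
    _ = δ * ∑ i, |γ i| + δ * √(Fintype.card ι) * ‖w‖ := by ring

theorem sum_abs_le_of_distortion {Γ : Submodule ℝ (EuclideanSpace ℝ ι)} {δ : ℝ}
    (hδ : 0 ≤ δ) (hdist : ∀ x ∈ Γ, √(Fintype.card ι) * ‖x‖ ≤ δ * ∑ i, |x i|)
    (γ : EuclideanSpace ℝ ι) (T : Finset ι) :
    ∑ i ∈ T, |γ i| ≤ √(#T) / √(Fintype.card ι) * δ * ∑ i, |γ i| +
      (1 + δ) * √(#T) * ‖Γᗮ.starProjection γ‖ := by
  set v := Γ.starProjection γ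
  set w := Γᗮ.starProjection γ
  have hv : √(#T) * (‖v‖ - δ * ‖w‖) ≤ √(#T) / √(Fintype.card ι) * (δ * ∑ i, |γ i|) := by
    refine sqrt_mul_le_sqrt_div_sqrt_mul (card_le_univ T) ?_
    linarith [sqrt_card_mul_norm_starProjection_le hδ hdist γ]
  calc ∑ i ∈ T, |γ i| ≤ ∑ i ∈ T, |v i| + ∑ i ∈ T, |w i| := by
        rw [← Γ.starProjection_add_starProjection_orthogonal γ]
        exact sum_abs_add_le_sum_abs_add_sum_abs v w T
    _ ≤ √(#T) * ‖v‖ + √(#T) * ‖w‖ := by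
      gcongr <;> exact EuclideanSpace.sum_abs_le_sqrt_card_mul_norm _ T
    _ ≤ √(#T) / √(Fintype.card ι) * δ * ∑ i, |γ i| + (1 + δ) * √(#T) * ‖w‖ := by
      linarith

/-- Interpolation step: for a subspace `Γ ⊆ ℝ^p` of distortion `δ` and any `γ`,
`‖γ_S‖₁ ≤ (√s/√p) δ ‖γ‖₁ + (1+δ) √s ‖π_{Γ^⊥} γ‖₂` whenever `|S| = s`. -/
theorem stmt_2 (p : ℕ) (δ : ℝ) (hδ : 1 ≤ δ)
    (Γ : Submodule ℝ (EuclideanSpace ℝ (Fin p)))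
    (hdist : ∀ x ∈ Γ, (∑ i, |x i|) ≤ Real.sqrt p * ‖x‖ ∧
      Real.sqrt p * ‖x‖ ≤ δ * ∑ i, |x i|)
    (γ : EuclideanSpace ℝ (Fin p)) (S : Finset (Fin p)) (s : ℕ) (hS : S.card = s) :
    (∑ i ∈ S, |γ i|) ≤ (Real.sqrt s / Real.sqrt p) * δ * (∑ i, |γ i|)
      + (1 + δ) * Real.sqrt s *
        ‖(Γᗮ.orthogonalProjectionOnto γ : EuclideanSpace ℝ (Fin p))‖ := by
  have hdist' : ∀ x ∈ Γ, √(Fintype.card (Fin p)) * ‖x‖ ≤ δ * ∑ i, |x i| := by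
    simpa only [Fintype.card_fin] using fun x hx ↦ (hdist x hx).2
  have h := sum_abs_le_of_distortion (by linarith) hdist' γ S
  rw [hS, Fintype.card_fin] at h
  exact h
end

section
/- Let β^ℓ be a minimizer of β ↦ (1/2)‖Xβ − y‖₂² + λ_ℓ‖β‖₁ where y = Xβ* + ε, and suppose ‖X^⊤ε‖_∞ ≤ λ_n⁰ with λ_ℓ ≥ λ_n⁰. Set h = β^ℓ − β*. Then for all subsets S ⊆ {1,…,p}: (1/(2λ_ℓ))[(1/2)‖Xh‖₂² + (λ_ℓ − λ_n⁰)‖h‖₁] ≤ ‖h_S‖₁ + ‖β*_{S^c}‖₁. -/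
/-!
Comparing the lasso objective at `βˡ` with its value at `β*` gives the basic inequality
`½‖Xh‖² ≤ εᵀXh + λ(‖β*‖₁ − ‖βˡ‖₁)`. The noise term is at most `λ⁰‖h‖₁` by Hölder's inequality,
and coordinatewise `|hᵢ| + |β*ᵢ| − |βˡᵢ|` is at most `2|hᵢ|` and at most `2|β*ᵢ|`; using the first
bound on `S` and the second on `Sᶜ` yields the claim after dividing by `2λ`.
-/

open Finset Matrix

noncomputable def l1 {p : ℕ} (v : Fin p → ℝ) : ℝ := ∑ i, |v i|

noncomputable def l2 {n : ℕ} (v : Fin n → ℝ) : ℝ := Real.sqrt (∑ i, (v i) ^ 2)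

/-- Restriction of a vector to a set of coordinates (zero elsewhere). -/
def restr {p : ℕ} (v : Fin p → ℝ) (S : Finset (Fin p)) : Fin p → ℝ :=
  fun i => if i ∈ S then v i else 0

noncomputable def lassoObjective {n p : ℕ} (X : Matrix (Fin n) (Fin p) ℝ) (y : Fin n → ℝ)
    (lam : ℝ) (β : Fin p → ℝ) : ℝ :=
  (1/2) * ∑ i, ((X *ᵥ β) i - y i) ^ 2 + lam * l1 β

section

variable {p : ℕ}

lemma l1_nonneg (v : Fin p → ℝ) : 0 ≤ l1 v :=
  sum_nonneg fun i _ => abs_nonneg (v i)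

lemma l1_restr (v : Fin p → ℝ) (S : Finset (Fin p)) : l1 (restr v S) = ∑ i ∈ S, |v i| := by
  simp only [l1, restr, apply_ite, abs_zero, sum_ite_mem, univ_inter]

lemma dotProduct_le_mul_l1 (v w : Fin p → ℝ) {c : ℝ} (hw : ∀ j, |w j| ≤ c) :
    v ⬝ᵥ w ≤ c * l1 v := by
  rw [l1, mul_sum]
  refine sum_le_sum fun j _ => ?_
  calc v j * w j ≤ |v j| * |w j| := by rw [← abs_mul]; exact le_abs_self _
    _ ≤ c * |v j| := by rw [mul_comm c]; exact mul_le_mul_of_nonneg_left (hw j) (abs_nonneg _)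

lemma l1_sub_add_l1_sub_l1_le (a b : Fin p → ℝ) (S : Finset (Fin p)) :
    l1 (a - b) + l1 b - l1 a ≤ 2 * (l1 (restr (a - b) S) + l1 (restr b Sᶜ)) := by
  have on_S : ∀ i, |a i - b i| + |b i| - |a i| ≤ 2 * |a i - b i| := fun i => by
    have := abs_sub_abs_le_abs_sub (b i) (a i)
    rw [abs_sub_comm (b i)] at this
    linarith
  have on_Sc : ∀ i, |a i - b i| + |b i| - |a i| ≤ 2 * |b i| := fun i => by
    linarith [abs_sub (a i) (b i)]
  calc l1 (a - b) + l1 b - l1 a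
      = ∑ i ∈ S, (|a i - b i| + |b i| - |a i|)
          + ∑ i ∈ Sᶜ, (|a i - b i| + |b i| - |a i|) := by
        rw [sum_add_sum_compl, sum_sub_distrib, sum_add_distrib]; rfl
    _ ≤ ∑ i ∈ S, 2 * |a i - b i| + ∑ i ∈ Sᶜ, 2 * |b i| :=
        add_le_add (sum_le_sum fun i _ => on_S i) (sum_le_sum fun i _ => on_Sc i)
    _ = 2 * (l1 (restr (a - b) S) + l1 (restr b Sᶜ)) := by
        rw [l1_restr, l1_restr, ← mul_sum, ← mul_sum, mul_add]; rfl

end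

lemma sum_sub_sq_eq {ι : Type*} [Fintype ι] (u e : ι → ℝ) :
    ∑ i, (u i - e i) ^ 2 = ∑ i, u i ^ 2 - 2 * (e ⬝ᵥ u) + ∑ i, e i ^ 2 := by
  rw [dotProduct, mul_sum, ← sum_sub_distrib, ← sum_add_distrib]
  exact sum_congr rfl fun i _ => by ring

lemma lasso_basic_inequality {n p : ℕ} {X : Matrix (Fin n) (Fin p) ℝ} {βstar βl : Fin p → ℝ}
    {ε y : Fin n → ℝ} {lam : ℝ} (hy : y = X *ᵥ βstar + ε)
    (hle : lassoObjective X y lam βl ≤ lassoObjective X y lam βstar) :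
    (1/2) * ∑ i, ((X *ᵥ (βl - βstar)) i) ^ 2
      ≤ ε ⬝ᵥ X *ᵥ (βl - βstar) + lam * (l1 βstar - l1 βl) := by
  have residual_l : ∀ i, (X *ᵥ βl) i - y i = (X *ᵥ (βl - βstar)) i - ε i := fun i => by
    rw [hy, mulVec_sub]; simp only [Pi.add_apply, Pi.sub_apply]; ring
  have residual_star : ∀ i, (X *ᵥ βstar) i - y i = -ε i := fun i => by
    rw [hy]; simp only [Pi.add_apply]; ring
  simp only [lassoObjective, residual_l, residual_star, neg_sq] at hle
  rw [sum_sub_sq_eq] at hle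
  linarith

/-- Basic lasso inequality: if `β^ℓ` minimizes `(1/2)‖Xβ−y‖₂² + λ‖β‖₁`, `y = Xβ* + ε`,
`‖Xᵀε‖_∞ ≤ λ⁰ ≤ λ`, and `h = β^ℓ − β*`, then for every subset `S`,
`(1/(2λ))[(1/2)‖Xh‖₂² + (λ−λ⁰)‖h‖₁] ≤ ‖h_S‖₁ + ‖β*_{Sᶜ}‖₁`. -/
theorem stmt_3 (n p : ℕ) (X : Matrix (Fin n) (Fin p) ℝ)
    (βstar βl : Fin p → ℝ) (ε y : Fin n → ℝ) (lam lam0 : ℝ)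
    (hy : y = X.mulVec βstar + ε)
    (hnoise : ∀ j, |Xᵀ.mulVec ε j| ≤ lam0)
    (hlam : lam0 ≤ lam) (hlam0 : 0 ≤ lam0)
    (hmin : ∀ β : Fin p → ℝ,
      (1/2) * (∑ i, (X.mulVec βl i - y i) ^ 2) + lam * l1 βl
        ≤ (1/2) * (∑ i, (X.mulVec β i - y i) ^ 2) + lam * l1 β) :
    ∀ S : Finset (Fin p),
      (1 / (2 * lam)) * ((1/2) * (∑ i, (X.mulVec (βl - βstar) i) ^ 2)
          + (lam - lam0) * l1 (βl - βstar))
        ≤ l1 (restr (βl - βstar) S) + l1 (restr βstar Sᶜ) := by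
  intro S
  have hlam_nonneg : 0 ≤ lam := hlam0.trans hlam
  have basic := lasso_basic_inequality (lam := lam) hy (hmin βstar)
  have noise : ε ⬝ᵥ X *ᵥ (βl - βstar) ≤ lam0 * l1 (βl - βstar) := by
    rw [← dotProduct_transpose_mulVec]
    exact dotProduct_le_mul_l1 _ _ hnoise
  have split_on_S := mul_le_mul_of_nonneg_left (l1_sub_add_l1_sub_l1_le βl βstar S) hlam_nonneg
  rw [one_div_mul_eq_div]
  exact div_le_of_le_mul₀ (by positivity)
    (add_nonneg (l1_nonneg _) (l1_nonneg _)) (by linarith)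
end
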